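/- arXiv:0710.5516 — 7 statements merged into one kernel-verified Lean document; each statement's English description precedes it below -/
import Mathlib

section
/- Let 𝔽 be a finite field with q elements, let n, r ∈ ℕ with r ≤ n, and let F be a homogeneous polynomial of degree n+1−r in n+2 variables over 𝔽 (defining a hypersurface X ⊂ P^{n+1} of degree n+1−r). Then the number of vectors x ∈ 𝔽^{n+2} with F(x) = 0 is at least q^{r+1}; equivalently, the number of 𝔽-rational points of X in P^{n+1} is at least |P^r(𝔽_q)| = q^r + q^{r−1} + ⋯ + q + 1. -/
/-!
The affine zero set `Z` of `F` is a cone containing `0`. If `W` is a subspace of dimension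
`n + 2 - r`, then `F` together with the `r` linear forms cutting out `W` has total degree at most
`n + 1 < n + 2`, so by Chevalley–Warning `Z ∩ W` contains a nonzero point. Finally, a cone in
an `N`-dimensional space containing `0` and meeting every `k`-dimensional subspace nontrivially
has at least `q^(N + 1 - k)` points: either it is everything, or its image in the quotient by a
line outside it is a cone of the same kind for `(k - 1)`-dimensional subspaces.
-/

open MvPolynomial
open Module (finBasis finrank)

namespace MvPolynomial

lemma IsHomogeneous.eval_smul {R σ : Type*} [CommSemiring R] {F : MvPolynomial σ R} {m : ℕ}
    (hF : F.IsHomogeneous m) (c : R) (x : σ → R) :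
    eval (c • x) F = c ^ m * eval x F := by
  rw [eval_eq, eval_eq, Finset.mul_sum]
  refine Finset.sum_congr rfl fun d hd => ?_
  have hdeg : ∑ i ∈ d.support, d i = m := by
    rw [← Finsupp.degree_apply, Finsupp.degree_eq_weight_one]
    exact hF (mem_support_iff.mp hd)
  simp only [Pi.smul_apply, smul_eq_mul, mul_pow, Finset.prod_mul_distrib,
    Finset.prod_pow_eq_pow_sum, hdeg]
  ring

end MvPolynomial

section Chevalley

variable {K σ : Type*} [Field K] [Fintype K] [Fintype σ]

-- Chevalley's theorem: `p` divides the number of common zeros, one of which is `0`.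
theorem exists_ne_zero_forall_eval_eq_zero {ι : Type*} [Fintype ι] {f : ι → MvPolynomial σ K}
    (h0 : ∀ i, eval 0 (f i) = 0) (hdeg : ∑ i, (f i).totalDegree < Fintype.card σ) :
    ∃ x ≠ 0, ∀ i, eval x (f i) = 0 := by
  classical
  have hp : (ringChar K).Prime := CharP.char_is_prime K _
  have hdvd := char_dvd_card_solutions_of_fintype_sum_lt (ringChar K) hdeg
  have hpos : 0 < Fintype.card {x : σ → K // ∀ i, eval x (f i) = 0} :=
    Fintype.card_pos_iff.mpr ⟨⟨0, h0⟩⟩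
  obtain ⟨x, hx⟩ := Fintype.exists_ne_of_one_lt_card
    (hp.one_lt.trans_le (Nat.le_of_dvd hpos hdvd)) ⟨0, h0⟩
  exact ⟨x, fun h => hx (Subtype.ext h), x.2⟩

theorem exists_ne_zero_mem_eval_eq_zero {F : MvPolynomial σ K} (h0 : eval 0 F = 0)
    (W : Submodule K (σ → K)) (hW : F.totalDegree < finrank K W) :
    ∃ x ∈ W, x ≠ 0 ∧ eval x F = 0 := by
  classical
  set m := finrank K ((σ → K) ⧸ W)
  let φ : (σ → K) →ₗ[K] Fin m → K := (finBasis K ((σ → K) ⧸ W)).equivFun.toLinearMap ∘ₗ W.mkQ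
  -- `F` together with `m = codim W` linear forms whose common zero set is `W`
  let f (i : Option (Fin m)) : MvPolynomial σ K :=
    i.elim F (LinearMap.toMatrix' φ).toMvPolynomial
  have hf (x : σ → K) : (∀ i, eval x (f i) = 0) ↔ eval x F = 0 ∧ x ∈ W := by
    have hφ : φ x = 0 ↔ x ∈ W := by simp [φ]
    simp [f, Option.forall, Matrix.toMvPolynomial_eval_eq_apply, LinearMap.toMatrix'_mulVec,
      ← hφ, _root_.funext_iff]
  have hdeg : ∑ i, (f i).totalDegree < Fintype.card σ := by
    have hm := W.finrank_quotient_add_finrank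
    rw [Module.finrank_fintype_fun_eq_card] at hm
    have hlin : ∑ i : Fin m, ((LinearMap.toMatrix' φ).toMvPolynomial i).totalDegree ≤ m := by
      simpa using Finset.sum_le_sum (s := Finset.univ) fun i _ =>
        Matrix.toMvPolynomial_totalDegree_le (LinearMap.toMatrix' φ) i
    rw [Fintype.sum_option]
    simp only [f, Option.elim]
    omega
  obtain ⟨x, hx0, hx⟩ := exists_ne_zero_forall_eval_eq_zero ((hf 0).mpr ⟨h0, W.zero_mem⟩) hdeg
  exact ⟨x, ((hf x).mp hx).2, hx0, ((hf x).mp hx).1⟩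

end Chevalley

section Blocking

variable {K V : Type*} [Field K] [AddCommGroup V] [Module K V]

variable (K) in
def IsBlockingSet (S : Set V) (k : ℕ) : Prop :=
  ∀ W : Submodule K V, finrank K W = k → ∃ x ∈ W, x ≠ 0 ∧ x ∈ S

lemma not_isBlockingSet_zero (S : Set V) : ¬IsBlockingSet K S 0 := fun h => by
  obtain ⟨x, hx, hx0, -⟩ := h ⊥ (finrank_bot K V)
  exact hx0 ((Submodule.mem_bot K).mp hx)

lemma Submodule.finrank_comap_mkQ [FiniteDimensional K V] (L : Submodule K V)
    (W : Submodule K (V ⧸ L)) : finrank K (W.comap L.mkQ) = finrank K W + finrank K L := by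
  set U := W.comap L.mkQ
  have hrange : LinearMap.range (L.mkQ ∘ₗ U.subtype) = W := by
    rw [LinearMap.range_comp, Submodule.range_subtype,
      Submodule.map_comap_eq_of_surjective L.mkQ_surjective]
  have hker : LinearMap.ker (L.mkQ ∘ₗ U.subtype) = L.comap U.subtype := by
    rw [LinearMap.ker_comp, Submodule.ker_mkQ]
  have hLU : L ≤ U := fun x hx => by simp [U, (Submodule.Quotient.mk_eq_zero L).mpr hx]
  rw [← (L.mkQ ∘ₗ U.subtype).finrank_range_add_finrank_ker, hrange, hker,
    (Submodule.comapSubtypeEquivOfLe hLU).finrank_eq]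

lemma IsBlockingSet.image_mkQ_span_singleton [FiniteDimensional K V] {S : Set V}
    (hS : ∀ (c : K) x, x ∈ S → c • x ∈ S) {P : V} (hP0 : P ≠ 0) (hP : P ∉ S) {k : ℕ}
    (h : IsBlockingSet K S (k + 1)) : IsBlockingSet K ((K ∙ P).mkQ '' S) k := by
  intro W hW
  obtain ⟨x, hxW, hx0, hxS⟩ := h (W.comap (K ∙ P).mkQ) (by
    rw [Submodule.finrank_comap_mkQ, hW, finrank_span_singleton hP0])
  refine ⟨(K ∙ P).mkQ x, hxW, fun hx => ?_, x, hxS, rfl⟩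
  obtain ⟨c, rfl⟩ := Submodule.mem_span_singleton.mp ((Submodule.Quotient.mk_eq_zero _).mp hx)
  have hc : c ≠ 0 := by rintro rfl; exact hx0 (zero_smul K P)
  exact hP (by simpa [smul_smul, hc] using hS c⁻¹ _ hxS)

theorem IsBlockingSet.card_pow_le_ncard [Finite K] [FiniteDimensional K V] {S : Set V}
    (hS : ∀ (c : K) x, x ∈ S → c • x ∈ S) (h0 : (0 : V) ∈ S) {k : ℕ}
    (h : IsBlockingSet K S k) : Nat.card K ^ (finrank K V + 1 - k) ≤ S.ncard := by
  induction k generalizing V with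
  | zero => exact absurd h (not_isBlockingSet_zero S)
  | succ k ih =>
    have : Finite V := Module.finite_of_finite K
    by_cases huniv : S = Set.univ
    · rw [huniv, Set.ncard_univ, Module.natCard_eq_pow_finrank (K := K) (V := V)]
      exact Nat.pow_le_pow_right Nat.card_pos (by omega)
    obtain ⟨P, hP⟩ := (Set.ne_univ_iff_exists_notMem S).mp huniv
    have hP0 : P ≠ 0 := by rintro rfl; exact hP h0
    have hdim : finrank K (V ⧸ K ∙ P) + 1 = finrank K V := by
      rw [← finrank_span_singleton (K := K) hP0]
      exact Submodule.finrank_quotient_add_finrank _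
    have hS' : ∀ (c : K) y, y ∈ (K ∙ P).mkQ '' S → c • y ∈ (K ∙ P).mkQ '' S := by
      rintro c _ ⟨x, hx, rfl⟩
      exact ⟨c • x, hS c x hx, map_smul _ c x⟩
    calc Nat.card K ^ (finrank K V + 1 - (k + 1))
        = Nat.card K ^ (finrank K (V ⧸ K ∙ P) + 1 - k) := by congr 1; omega
      _ ≤ ((K ∙ P).mkQ '' S).ncard :=
        ih hS' ⟨0, h0, map_zero _⟩ (h.image_mkQ_span_singleton hS hP0 hP)
      _ ≤ S.ncard := Set.ncard_image_le S.toFinite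

end Blocking

/-- Exercise 2.3: a hypersurface of degree `n+1-r` in `ℙ^{n+1}` over `𝔽_q` has at
least `q^r + ⋯ + q + 1` rational points; equivalently its affine cone has at least
`q^{r+1}` points. -/
theorem hypersurface_point_lower_bound
    (𝔽 : Type) [Field 𝔽] [Fintype 𝔽] (q : ℕ) (hq : Fintype.card 𝔽 = q)
    (n r : ℕ) (hr : r ≤ n)
    (F : MvPolynomial (Fin (n + 2)) 𝔽) (hF : F.IsHomogeneous (n + 1 - r)) :
    q ^ (r + 1) ≤ Nat.card {x : Fin (n + 2) → 𝔽 // eval x F = 0} := by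
  set Z : Set (Fin (n + 2) → 𝔽) := {x | eval x F = 0}
  have hcone : ∀ (c : 𝔽) x, x ∈ Z → c • x ∈ Z := fun c x (hx : eval x F = 0) => by
    simp only [Z, Set.mem_ofPred_eq, hF.eval_smul, hx, mul_zero]
  have h0 : (0 : Fin (n + 2) → 𝔽) ∈ Z := by
    simpa [Z, zero_pow (by omega : n + 1 - r ≠ 0)] using hF.eval_smul 0 0
  have hblock : IsBlockingSet 𝔽 Z (n + 2 - r) := fun W hW =>
    exists_ne_zero_mem_eval_eq_zero h0 W (by have := hF.totalDegree_le; omega)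
  have hbound := hblock.card_pow_le_ncard hcone h0
  rwa [Module.finrank_fin_fun, show n + 2 + 1 - (n + 2 - r) = r + 1 by omega,
    Nat.card_eq_fintype_card, hq] at hbound
end

section
/- Let F = X₀³ + X₁³ + X₂³ + X₀²X₁ + X₁²X₂ + X₂²X₀ + X₀X₁X₂ + X₂²X₃ + X₂X₃² be the cubic form in 4 variables over 𝔽₂ = ZMod 2. Then: (a) the only nonzero vector x ∈ (ZMod 2)^4 with F(x) = 0 is (0,0,0,1), so the cubic surface (F = 0) ⊂ P^3 has exactly one 𝔽₂-rational point; and (b) for every field K of characteristic 2 and every x ∈ K^4, if all four partial derivatives of F (with coefficients mapped into K) vanish at x, then x = 0, so the surface (F = 0) is smooth. -/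
/-!
Over `𝔽₂` the rational points are found by checking the sixteen vectors of `𝔽₂⁴`. In
characteristic 2 the partial derivatives of `F` are `X₀² + X₂² + X₁X₂`, `X₁² + X₀² + X₀X₂`,
`X₂² + X₁² + X₀X₁ + X₃²` and `X₂²`; a common zero in a reduced ring therefore has `x₂ = 0`
from the last one, and then successively `x₀ = 0`, `x₁ = 0`, `x₃ = 0`.
-/

open MvPolynomial

/-- The cubic form over `𝔽₂` of Proposition 2.1. -/
noncomputable def SwDCubic : MvPolynomial (Fin 4) (ZMod 2) :=
  X 0 ^ 3 + X 1 ^ 3 + X 2 ^ 3 + X 0 ^ 2 * X 1 + X 1 ^ 2 * X 2 + X 2 ^ 2 * X 0 +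
    X 0 * X 1 * X 2 + X 2 ^ 2 * X 3 + X 2 * X 3 ^ 2

theorem eval_SwDCubic (x : Fin 4 → ZMod 2) :
    eval x SwDCubic = x 0 ^ 3 + x 1 ^ 3 + x 2 ^ 3 + x 0 ^ 2 * x 1 + x 1 ^ 2 * x 2 +
      x 2 ^ 2 * x 0 + x 0 * x 1 * x 2 + x 2 ^ 2 * x 3 + x 2 * x 3 ^ 2 := by
  simp [SwDCubic]

theorem eval_SwDCubic_eq_zero_iff (x : Fin 4 → ZMod 2) (hx : x ≠ 0) :
    eval x SwDCubic = 0 ↔ x = ![0, 0, 0, 1] := by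
  rw [eval_SwDCubic]
  revert x
  decide

theorem pderiv_zero_SwDCubic : pderiv 0 SwDCubic = X 0 ^ 2 + X 2 ^ 2 + X 1 * X 2 := by
  simp [SwDCubic]
  linear_combination (X 0 ^ 2 + X 0 * X 1) *
    CharTwo.two_eq_zero (R := MvPolynomial (Fin 4) (ZMod 2))

theorem pderiv_one_SwDCubic : pderiv 1 SwDCubic = X 1 ^ 2 + X 0 ^ 2 + X 0 * X 2 := by
  simp [SwDCubic]
  linear_combination (X 1 ^ 2 + X 1 * X 2) *
    CharTwo.two_eq_zero (R := MvPolynomial (Fin 4) (ZMod 2))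

theorem pderiv_two_SwDCubic :
    pderiv 2 SwDCubic = X 2 ^ 2 + X 1 ^ 2 + X 0 * X 1 + X 3 ^ 2 := by
  simp [SwDCubic]
  linear_combination (X 2 ^ 2 + X 0 * X 2 + X 2 * X 3) *
    CharTwo.two_eq_zero (R := MvPolynomial (Fin 4) (ZMod 2))

theorem pderiv_three_SwDCubic : pderiv 3 SwDCubic = X 2 ^ 2 := by
  simp [SwDCubic]
  exact CharTwo.two_eq_zero (R := MvPolynomial (Fin 4) (ZMod 2))

theorem eq_zero_of_SwDCubic_pderivs_vanish {R : Type*} [CommRing R] [IsReduced R]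
    (x : Fin 4 → R) (h₀ : x 0 ^ 2 + x 2 ^ 2 + x 1 * x 2 = 0)
    (h₁ : x 1 ^ 2 + x 0 ^ 2 + x 0 * x 2 = 0)
    (h₂ : x 2 ^ 2 + x 1 ^ 2 + x 0 * x 1 + x 3 ^ 2 = 0) (h₃ : x 2 ^ 2 = 0) : x = 0 := by
  have hx₂ : x 2 = 0 := IsReduced.eq_zero _ ⟨2, h₃⟩
  have hx₀ : x 0 = 0 :=
    IsReduced.eq_zero _ ⟨2, by linear_combination h₀ - (x 2 + x 1) * hx₂⟩
  have hx₁ : x 1 = 0 :=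
    IsReduced.eq_zero _ ⟨2, by linear_combination h₁ - (x 0 + x 2) * hx₀⟩
  have hx₃ : x 3 = 0 :=
    IsReduced.eq_zero _ ⟨2, by linear_combination h₂ - x 2 * hx₂ - x 1 * hx₁ - x 1 * hx₀⟩
  ext i
  fin_cases i <;> assumption

/-- Proposition 2.1 (existence part): the cubic surface `(SwDCubic = 0) ⊂ ℙ³` over `𝔽₂`
is smooth and has exactly one `𝔽₂`-rational point, namely `(0:0:0:1)`. -/
theorem SwDCubic_unique_point_and_smooth :
    (∀ x : Fin 4 → ZMod 2, x ≠ 0 → (eval x SwDCubic = 0 ↔ x = ![0, 0, 0, 1])) ∧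
    (∀ (K : Type) [Field K] [CharP K 2], ∀ x : Fin 4 → K,
      (∀ i, eval x ((pderiv i SwDCubic).map (ZMod.castHom (dvd_refl 2) K)) = 0) →
      x = 0) := by
  refine ⟨eval_SwDCubic_eq_zero_iff, fun K _ _ x h => ?_⟩
  have h₀ := h 0
  have h₁ := h 1
  have h₂ := h 2
  have h₃ := h 3
  simp only [pderiv_zero_SwDCubic, pderiv_one_SwDCubic, pderiv_two_SwDCubic,
    pderiv_three_SwDCubic, eval_map, eval₂_add, eval₂_mul, eval₂_pow, eval₂_X]
    at h₀ h₁ h₂ h₃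
  exact eq_zero_of_SwDCubic_pderivs_vanish x h₀ h₁ h₂ h₃
end

section
/- For every n ∈ ℕ there exists a homogeneous polynomial H of degree n+1 in n+2 variables over 𝔽₂ = ZMod 2 such that for every vector x ∈ (ZMod 2)^{n+2}, H(x) = 0 if and only if x = (0,…,0) or x = (1,…,1). Consequently, H defines a hypersurface of degree n+1 in P^{n+1} over 𝔽₂ containing exactly one 𝔽₂-rational point, namely (1:1:⋯:1). -/
/-!
Over `𝔽₂`, the function `x ↦ ∑_{∅ ≠ S ⊊ [n+2]} ∏_{i ∈ S} x_i = ∏ (1 + x_i) - 1 - ∏ x_i`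
vanishes exactly at the two constant vectors. Each of its monomials has degree at most `n + 1`,
and it can be padded to degree exactly `n + 1` by raising the exponent of one of its variables,
which does not change its values on `𝔽₂`-points since `a ^ (k + 1) = a` there.
-/

open MvPolynomial Finset

variable {σ : Type*}

theorem sum_sdiff_empty_univ_prod_eq {R : Type*} [CommRing R] [Fintype σ] [DecidableEq σ]
    [Nonempty σ] (x : σ → R) :
    ∑ S ∈ univ \ {∅, univ}, ∏ i ∈ S, x i = ∏ i, (1 + x i) - 1 - ∏ i, x i := by
  rw [sum_sdiff_eq_sub (subset_univ _), sum_pair univ_nonempty.ne_empty.symm, ← powerset_univ,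
    ← prod_one_add, prod_empty, sub_sub]

theorem ZMod.prod_one_add_sub_one_sub_prod_eq_zero_iff [Fintype σ] [Nonempty σ]
    (x : σ → ZMod 2) : ∏ i, (1 + x i) - 1 - ∏ i, x i = 0 ↔ x = 0 ∨ x = 1 := by
  have one_add_one : (1 + 1 : ZMod 2) = 0 := rfl
  constructor
  · intro h
    by_contra! hx
    obtain ⟨i, hi⟩ := Function.ne_iff.1 hx.1
    obtain ⟨j, hj⟩ := Function.ne_iff.1 hx.2
    have eq_one_of_ne_zero : ∀ a : ZMod 2, a ≠ 0 → a = 1 := by decide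
    have eq_zero_of_ne_one : ∀ a : ZMod 2, a ≠ 1 → a = 0 := by decide
    rw [prod_eq_zero (mem_univ i) (by rw [eq_one_of_ne_zero _ hi, one_add_one]),
      prod_eq_zero (mem_univ j) (eq_zero_of_ne_one _ hj)] at h
    exact absurd h (by decide)
  · rintro (rfl | rfl)
    · simp [zero_pow Fintype.card_ne_zero]
    · simp [one_add_one, zero_pow Fintype.card_ne_zero]

theorem exists_isHomogeneous_eval_eq_prod {S : Finset σ} (hS : S.Nonempty) {d : ℕ}
    (hd : #S ≤ d) :
    ∃ p : MvPolynomial σ (ZMod 2), p.IsHomogeneous d ∧ ∀ x, eval x p = ∏ i ∈ S, x i := by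
  classical
  obtain ⟨i, hi⟩ := hS
  refine ⟨X i ^ (d - #S) * ∏ j ∈ S, X j, ?_, fun x => ?_⟩
  · have := (isHomogeneous_X_pow i (d - #S)).mul
      (IsHomogeneous.prod S (fun j => X j) (fun _ => 1) fun j _ => isHomogeneous_X (ZMod 2) j)
    simpa [Nat.sub_add_cancel hd] using this
  · have hxi : IsIdempotentElem (x i) := by simpa [IsIdempotentElem, sq] using ZMod.pow_card (x i)
    simp only [map_mul, map_pow, map_prod, eval_X]
    rw [← mul_prod_erase S _ hi, ← mul_assoc, ← pow_succ, hxi.pow_succ_eq]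

theorem exists_isHomogeneous_eval_eq_sum_prod (T : Finset (Finset σ)) (d : ℕ)
    (hT : ∀ S ∈ T, S.Nonempty ∧ #S ≤ d) :
    ∃ p : MvPolynomial σ (ZMod 2), p.IsHomogeneous d ∧
      ∀ x, eval x p = ∑ S ∈ T, ∏ i ∈ S, x i := by
  choose! p hp hpx using fun S hS => exists_isHomogeneous_eval_eq_prod (hT S hS).1 (hT S hS).2
  exact ⟨∑ S ∈ T, p S, IsHomogeneous.sum _ _ _ hp, fun x => by
    simp only [map_sum]; exact sum_congr rfl fun S hS => hpx S hS x⟩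

/-- v. Bothmer's construction: for every `n` there is a homogeneous polynomial of
degree `n+1` in `n+2` variables over `𝔽₂` vanishing on `𝔽₂^{n+2}` exactly at the
all-zeros and all-ones vectors; it defines a degree `n+1` hypersurface in `ℙ^{n+1}`
with exactly one `𝔽₂`-point, namely `(1:1:⋯:1)`. -/
theorem bothmer_hypersurface (n : ℕ) :
    ∃ H : MvPolynomial (Fin (n + 2)) (ZMod 2),
      H.IsHomogeneous (n + 1) ∧
      ∀ x : Fin (n + 2) → ZMod 2, (eval x H = 0 ↔ (x = 0 ∨ x = fun _ => 1)) := by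
  have proper_nonempty :
      ∀ S ∈ (univ \ {∅, univ} : Finset (Finset (Fin (n + 2)))), S.Nonempty ∧ #S ≤ n + 1 := by
    intro S hS
    simp only [mem_sdiff, mem_insert, mem_singleton, not_or] at hS
    have := (card_lt_iff_ne_univ S).2 hS.2.2
    exact ⟨nonempty_iff_ne_empty.2 hS.2.1, by simpa [Nat.lt_succ_iff] using this⟩
  obtain ⟨H, hH, hHx⟩ := exists_isHomogeneous_eval_eq_sum_prod _ _ proper_nonempty
  refine ⟨H, hH, fun x => ?_⟩
  rw [hHx, sum_sdiff_empty_univ_prod_eq, ZMod.prod_one_add_sub_one_sub_prod_eq_zero_iff]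
  rfl
end

section
/- Let K be a field, N ∈ ℕ, and F a homogeneous polynomial of degree 3 in N variables over K. Let p, s ∈ K^N satisfy F(p) = 0 and F(s) = 0. Then there exist c, d ∈ K such that for all α, β ∈ K one has F(α·p + β·s) = α·β·(c·α + d·β); in particular, the third intersection point of the line through p and s with the cubic is defined over K: F(d·p − c·s) = 0. -/
/-!
Parametrising the line through `p` and `s` by `(α, β) ↦ α • p + β • s` turns `F` into a binary
cubic form `a₀β³ + a₁αβ² + a₂α²β + a₃α³` with coefficients in `K`. Evaluating at `(1, 0)` and
`(0, 1)` gives `a₃ = F(p) = 0` and `a₀ = F(s) = 0`, so the form is `αβ(a₂α + a₁β)`, which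
vanishes at `(a₁, -a₂)`.
-/

open MvPolynomial Finset

namespace MvPolynomial

variable {R σ : Type*} [CommSemiring R]

theorem IsHomogeneous.eval_fin_two {Q : MvPolynomial (Fin 2) R} {n : ℕ}
    (hQ : Q.IsHomogeneous n) (x : Fin 2 → R) :
    eval x Q = ∑ k ∈ range (n + 1),
      coeff (Finsupp.single 0 k + Finsupp.single 1 (n - k)) Q * x 0 ^ k * x 1 ^ (n - k) := by
  set e : ℕ → Fin 2 →₀ ℕ := fun k => Finsupp.single 0 k + Finsupp.single 1 (n - k)
  have he_inj : Set.InjOn e (range (n + 1)) := fun k _ l _ h => by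
    simpa [e] using DFunLike.congr_fun h 0
  have hsupp : Q.support ⊆ (range (n + 1)).image e := by
    intro d hd
    have hdeg : d 0 + d 1 = n := by
      simpa [Finsupp.weight_apply, Finsupp.sum_fintype, Fin.sum_univ_two]
        using hQ (mem_support_iff.mp hd)
    refine mem_image.mpr ⟨d 0, mem_range.mpr (by omega), ?_⟩
    ext i
    fin_cases i <;> simp [e]; omega
  rw [eval_eq', sum_subset hsupp fun d _ hd => by simp [notMem_support_iff.mp hd],
    sum_image he_inj]
  refine sum_congr rfl fun k _ => ?_
  simp [e, Fin.prod_univ_two, mul_assoc]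

noncomputable def restrictLine (p s : σ → R) (F : MvPolynomial σ R) : MvPolynomial (Fin 2) R :=
  aeval (fun i => C (p i) * X 0 + C (s i) * X 1) F

theorem eval_restrictLine (p s : σ → R) (F : MvPolynomial σ R) (x : Fin 2 → R) :
    eval x (restrictLine p s F) = eval (x 0 • p + x 1 • s) F := by
  rw [restrictLine, aeval_eq_bind₁, eval, eval₂Hom_bind₁, eval]
  congr 2
  funext i
  simp [mul_comm]

theorem isHomogeneous_restrictLine {F : MvPolynomial σ R} {n : ℕ} (hF : F.IsHomogeneous n)
    (p s : σ → R) : (restrictLine p s F).IsHomogeneous n := by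
  have hlinear (a b : R) : (C a * X 0 + C b * X 1 : MvPolynomial (Fin 2) R).IsHomogeneous 1 :=
    (isHomogeneous_C_mul_X a 0).add (isHomogeneous_C_mul_X b 1)
  simpa only [restrictLine, one_mul] using hF.aeval _ fun i => hlinear (p i) (s i)

theorem IsHomogeneous.exists_eval_smul_add_smul {F : MvPolynomial σ R} {n : ℕ}
    (hF : F.IsHomogeneous n) (p s : σ → R) :
    ∃ a : ℕ → R, ∀ α β : R,
      eval (α • p + β • s) F = ∑ k ∈ range (n + 1), a k * α ^ k * β ^ (n - k) :=
  ⟨fun k => coeff (Finsupp.single 0 k + Finsupp.single 1 (n - k)) (restrictLine p s F),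
    fun α β => by
      simpa [eval_restrictLine] using (isHomogeneous_restrictLine hF p s).eval_fin_two ![α, β]⟩

end MvPolynomial

/-- The third intersection point map: if `F` is a cubic form vanishing at `p` and `s`,
then the restriction of `F` to the line through `p` and `s` is `αβ(cα + dβ)` for some
`c, d ∈ K`, and the third intersection point `d·p − c·s` lies on the cubic. -/
theorem third_intersection_point
    (K : Type) [Field K] (N : ℕ)
    (F : MvPolynomial (Fin N) K) (hF : F.IsHomogeneous 3)
    (p s : Fin N → K) (hp : eval p F = 0) (hs : eval s F = 0) :
    ∃ c d : K,
      (∀ α β : K, eval (α • p + β • s) F = α * β * (c * α + d * β)) ∧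
      eval (d • p - c • s) F = 0 := by
  obtain ⟨a, ha⟩ := hF.exists_eval_smul_add_smul p s
  have hcubic (α β : K) :
      eval (α • p + β • s) F = a 0 * β ^ 3 + a 1 * α * β ^ 2 + a 2 * α ^ 2 * β + a 3 * α ^ 3 := by
    simp [ha, sum_range_succ]
  have ha₃ : a 3 = 0 := by simpa [hp] using (hcubic 1 0).symm
  have ha₀ : a 0 = 0 := by simpa [hs] using (hcubic 0 1).symm
  refine ⟨a 2, a 1, fun α β => by rw [hcubic, ha₀, ha₃]; ring, ?_⟩
  rw [sub_eq_add_neg, ← neg_smul, hcubic, ha₀, ha₃]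
  ring
end

section
/- Let 𝔽₁₆ be the field with 16 elements (GaloisField 2 4) and let F = X₀³ + X₁³ + X₂³ + X₃³ be the Fermat cubic form in 4 variables over 𝔽₁₆. Then every 𝔽₁₆-point of the Fermat cubic surface lies on a line contained in the surface: for every nonzero x ∈ 𝔽₁₆^4 with F(x) = 0, there exist linearly independent vectors u, v ∈ 𝔽₁₆^4 such that F(α·u + β·v) = 0 for all α, β ∈ 𝔽₁₆, and x = α·u + β·v for some α, β ∈ 𝔽₁₆. -/
/-!
Every cube `y = t³` in `𝔽₁₆` satisfies `y⁶ = y`, i.e. lies in `{0} ∪ μ₅`. In characteristic 2,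
distinct `u ≠ v` with `u⁶ = u`, `v⁶ = v` satisfy `(uv)²(u + v) = 1 + (u + v)⁵`, so the sum `u + v`
determines the product and hence the pair `{u, v}`. Therefore the four cubes `xᵢ³` of a point of
the surface pair up as `xᵢ³ = xⱼ³`, `xₖ³ = xₗ³`, and the point lies on the line
`xᵢ = ζ xⱼ, xₖ = η xₗ` (`ζ³ = η³ = -1`), one of the 27 lines of the Fermat cubic surface.
-/

open MvPolynomial

namespace CharTwo

variable {K : Type*} [Field K] [CharP K 2]

theorem sq_mul_mul_add_eq_one_add_pow_five {u v : K} (hu : u ^ 6 = u) (hv : v ^ 6 = v)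
    (huv : u ≠ v) : (u * v) ^ 2 * (u + v) = 1 + (u + v) ^ 5 := by
  -- `(u⁶ - v⁶) / (u - v) = 1`, and modulo 2 this quotient is `(u + v)⁵ + (uv)²(u + v)`.
  have hquot : (u - v) * (u ^ 5 + u ^ 4 * v + u ^ 3 * v ^ 2 + u ^ 2 * v ^ 3 + u * v ^ 4 + v ^ 5 - 1)
      = 0 := by
    linear_combination hu - hv
  have hsum := (mul_eq_zero.1 hquot).resolve_left (sub_ne_zero.2 huv)
  linear_combination hsum - (u ^ 5 + 3 * u ^ 4 * v + 5 * u ^ 3 * v ^ 2 + 5 * u ^ 2 * v ^ 3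
    + 3 * u * v ^ 4 + v ^ 5) * (two_eq_zero : (2 : K) = 0)

theorem eq_or_eq_of_add_eq_add_of_pow_six_eq_self {a b c d : K} (ha : a ^ 6 = a)
    (hb : b ^ 6 = b) (hc : c ^ 6 = c) (hd : d ^ 6 = d) (hab : a ≠ b) (hcd : c ≠ d)
    (h : a + b = c + d) : a = c ∨ a = d := by
  have hs : a + b ≠ 0 := fun h0 ↦ hab (CharTwo.add_eq_zero.1 h0)
  have hprod : a * b = c * d := by
    have hab' := sq_mul_mul_add_eq_one_add_pow_five ha hb hab
    have hcd' := sq_mul_mul_add_eq_one_add_pow_five hc hd hcd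
    rw [← h] at hcd'
    exact sq_inj.1 (mul_right_cancel₀ hs (hab'.trans hcd'.symm))
  have hroots : (a + c) * (a + d) = 0 := by
    linear_combination -a * h - hprod + (a ^ 2 + a * b) * (two_eq_zero : (2 : K) = 0)
  rcases mul_eq_zero.1 hroots with hac | had
  · exact Or.inl (CharTwo.add_eq_zero.1 hac)
  · exact Or.inr (CharTwo.add_eq_zero.1 had)

theorem exists_perm_eq_and_eq_of_sum_eq_zero {y : Fin 4 → K} (hy : ∀ i, y i ^ 6 = y i)
    (hsum : ∑ i, y i = 0) : ∃ σ : Equiv.Perm (Fin 4), y (σ 0) = y (σ 1) ∧ y (σ 2) = y (σ 3) := by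
  rw [Fin.sum_univ_four] at hsum
  have hpairs : y 0 + y 1 = y 2 + y 3 := by
    rwa [← CharTwo.add_eq_zero, ← add_assoc]
  by_cases h01 : y 0 = y 1
  · rw [h01, add_self_eq_zero, eq_comm, CharTwo.add_eq_zero] at hpairs
    exact ⟨1, h01, hpairs⟩
  by_cases h23 : y 2 = y 3
  · rw [h23, add_self_eq_zero, CharTwo.add_eq_zero] at hpairs
    exact ⟨1, hpairs, h23⟩
  rcases eq_or_eq_of_add_eq_add_of_pow_six_eq_self (hy 0) (hy 1) (hy 2) (hy 3) h01 h23 hpairs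
    with h02 | h03
  · refine ⟨Equiv.swap 1 2, ?_⟩
    rw [h02] at hpairs
    simp [Equiv.swap_apply_of_ne_of_ne, h02, add_left_cancel hpairs]
  · refine ⟨Equiv.swap 1 3, ?_⟩
    rw [h03, add_comm (y 2)] at hpairs
    simp [Equiv.swap_apply_of_ne_of_ne, h03, add_left_cancel hpairs]

end CharTwo

section Field

variable {K : Type*} [Field K]

theorem exists_pow_three_eq_neg_one_and_eq_mul_of_add_eq_zero {a b : K} (h : a ^ 3 + b ^ 3 = 0) :
    ∃ ζ : K, ζ ^ 3 = -1 ∧ a = ζ * b := by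
  by_cases hb : b = 0
  · subst hb
    refine ⟨-1, by ring, ?_⟩
    simpa using h
  · refine ⟨a / b, ?_, (div_mul_cancel₀ a hb).symm⟩
    rw [div_pow, div_eq_iff (pow_ne_zero 3 hb)]
    linear_combination h

theorem exists_line_of_pow_three_add_pow_three_eq_zero (σ : Equiv.Perm (Fin 4)) {x : Fin 4 → K}
    (h₁ : x (σ 0) ^ 3 + x (σ 1) ^ 3 = 0) (h₂ : x (σ 2) ^ 3 + x (σ 3) ^ 3 = 0) :
    ∃ u v : Fin 4 → K, LinearIndependent K ![u, v] ∧
      (∀ α β : K, ∑ i, (α • u + β • v) i ^ 3 = 0) ∧ ∃ α β : K, x = α • u + β • v := by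
  obtain ⟨ζ, hζ, hx₀⟩ := exists_pow_three_eq_neg_one_and_eq_mul_of_add_eq_zero h₁
  obtain ⟨η, hη, hx₂⟩ := exists_pow_three_eq_neg_one_and_eq_mul_of_add_eq_zero h₂
  refine ⟨fun i ↦ ![ζ, 1, 0, 0] (σ.symm i), fun i ↦ ![0, 0, η, 1] (σ.symm i), ?_, ?_,
    x (σ 1), x (σ 3), ?_⟩
  · rw [LinearIndependent.pair_iff]
    intro s t hst
    exact ⟨by simpa using congrFun hst (σ 1), by simpa using congrFun hst (σ 3)⟩
  · intro α β
    rw [← Equiv.sum_comp σ, Fin.sum_univ_four]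
    simp only [Pi.add_apply, Pi.smul_apply, smul_eq_mul, Equiv.symm_apply_apply,
      Matrix.cons_val_zero, Matrix.cons_val_one, Matrix.cons_val, mul_one, mul_zero, add_zero,
      zero_add]
    linear_combination α ^ 3 * hζ + β ^ 3 * hη
  · funext i
    obtain ⟨k, rfl⟩ := σ.surjective i
    fin_cases k <;> simp [hx₀, hx₂, mul_comm]

end Field

theorem pow_three_pow_six_eq_pow_three {K : Type*} [Field K] [Finite K] (hK : Nat.card K = 16)
    (t : K) : (t ^ 3) ^ 6 = t ^ 3 := by
  have : Fintype K := Fintype.ofFinite K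
  have h16 : t ^ 16 = t := by
    simpa [← Nat.card_eq_fintype_card, hK] using FiniteField.pow_card t
  calc (t ^ 3) ^ 6 = t ^ 16 * t ^ 2 := by ring
    _ = t ^ 3 := by rw [h16]; ring

theorem fermat_cubic_points_on_lines_general
    (F : MvPolynomial (Fin 4) (GaloisField 2 4))
    (hF : F = X 0 ^ 3 + X 1 ^ 3 + X 2 ^ 3 + X 3 ^ 3)
    (x : Fin 4 → GaloisField 2 4) (hx : eval x F = 0) :
    ∃ u v : Fin 4 → GaloisField 2 4,
      LinearIndependent (GaloisField 2 4) ![u, v] ∧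
      (∀ α β : GaloisField 2 4, eval (α • u + β • v) F = 0) ∧
      ∃ α β : GaloisField 2 4, x = α • u + β • v := by
  have heval (w : Fin 4 → GaloisField 2 4) : eval w F = ∑ i, w i ^ 3 := by
    simp [hF, Fin.sum_univ_four]
  have hcubes (t : GaloisField 2 4) : (t ^ 3) ^ 6 = t ^ 3 :=
    pow_three_pow_six_eq_pow_three (by rw [GaloisField.card 2 4 (by norm_num)]; norm_num) t
  rw [heval] at hx
  obtain ⟨σ, h₁, h₂⟩ :=
    CharTwo.exists_perm_eq_and_eq_of_sum_eq_zero (y := fun i ↦ x i ^ 3) (fun i ↦ hcubes (x i)) hx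
  simp_rw [heval]
  exact exists_line_of_pow_three_add_pow_three_eq_zero σ (by rw [h₁, CharTwo.add_self_eq_zero])
    (by rw [h₂, CharTwo.add_self_eq_zero])

/-- Over `𝔽₁₆`, every point of the Fermat cubic surface `x₀³+x₁³+x₂³+x₃³ = 0`
lies on a line contained in the surface. -/
theorem fermat_cubic_points_on_lines
    (F : MvPolynomial (Fin 4) (GaloisField 2 4))
    (hF : F = X 0 ^ 3 + X 1 ^ 3 + X 2 ^ 3 + X 3 ^ 3)
    (x : Fin 4 → GaloisField 2 4) (hx0 : x ≠ 0) (hx : eval x F = 0) :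
    ∃ u v : Fin 4 → GaloisField 2 4,
      LinearIndependent (GaloisField 2 4) ![u, v] ∧
      (∀ α β : GaloisField 2 4, eval (α • u + β • v) F = 0) ∧
      ∃ α β : GaloisField 2 4, x = α • u + β • v :=
  fermat_cubic_points_on_lines_general F hF x hx
end

section
/- Let K be a field of characteristic 2, let n ≥ 1, let m be odd, and let F = Σ_{i≠j} X_i^{2^n} X_j (sum over ordered pairs i ≠ j) in the polynomial ring over K in the m+1 variables X₀, …, X_m. Then the hypersurface (F = 0) ⊂ P^m is smooth: for every x ∈ K^{m+1}, if F(x) = 0 and all partial derivatives ∂F/∂X_k vanish at x, then x = 0. -/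
open MvPolynomial

/-!
When `2 ^ n` vanishes in `K`, differentiating `X_i ^ (2 ^ n) * X_j` only hits the factor `X_j`,
so `∂F/∂X_k = ∑_{i ≠ k} X_i ^ (2 ^ n)`. If all of these vanish at `x`, every `x_k ^ (2 ^ n)`
equals the full sum `S`; summing over the `m + 1` coordinates gives `S = (m + 1) S = 0`
because `m + 1` is even, so each `x_k` is zero.
-/

theorem pderiv_X_pow_mul_X_of_natCast_eq_zero {σ R : Type*} [CommSemiring R] [DecidableEq σ]
    {q : ℕ} (hq : (q : R) = 0) (k i j : σ) :
    pderiv k (X i ^ q * X j : MvPolynomial σ R) = if j = k then X i ^ q else 0 := by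
  have hq' : (q : MvPolynomial σ R) = 0 := by rw [← map_natCast C, hq, map_zero]
  rw [pderiv_mul, pderiv_pow, hq', zero_mul, zero_mul, zero_mul, zero_add, pderiv_X]
  by_cases h : j = k <;> simp [h]

theorem pderiv_sum_offDiag_X_pow_mul_X {σ R : Type*} [CommSemiring R] [Fintype σ] [DecidableEq σ]
    {q : ℕ} (hq : (q : R) = 0) (k : σ) :
    pderiv k (∑ ij ∈ Finset.univ.offDiag, X ij.1 ^ q * X ij.2 : MvPolynomial σ R)
      = ∑ i ∈ Finset.univ.erase k, X i ^ q := by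
  simp only [map_sum, pderiv_X_pow_mul_X_of_natCast_eq_zero hq, ← Finset.sum_filter]
  refine Finset.sum_nbij' Prod.fst (fun i => (i, k)) ?_ ?_ ?_ ?_ (fun _ _ => rfl) <;>
    grind

theorem eq_zero_of_sum_erase_eq_zero {ι R : Type*} [Fintype ι] [DecidableEq ι]
    [NonAssocSemiring R] (hcard : (Fintype.card ι : R) = 0) {y : ι → R}
    (hy : ∀ k, ∑ i ∈ Finset.univ.erase k, y i = 0) : y = 0 := by
  have hy_sum : ∀ k, y k = ∑ i, y i := fun k => by
    rw [← Finset.add_sum_erase _ _ (Finset.mem_univ k), hy k, add_zero]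
  have hsum : ∑ i, y i = 0 :=
    calc ∑ i, y i = ∑ _k : ι, ∑ i, y i := Finset.sum_congr rfl fun k _ => hy_sum k
      _ = (Fintype.card ι : R) * ∑ i, y i := by
        rw [Finset.sum_const, Finset.card_univ, nsmul_eq_mul]
      _ = 0 := by rw [hcard, zero_mul]
  funext k
  rw [hy_sum k, hsum, Pi.zero_apply]

theorem sum_offDiag_smooth_general
    (K : Type) [Field K] [CharP K 2] (n : ℕ) (hn : 1 ≤ n)
    (m : ℕ) (hm : Odd m)
    (F : MvPolynomial (Fin (m + 1)) K)
    (hF : F = ∑ ij ∈ Finset.univ.offDiag, X ij.1 ^ 2 ^ n * X ij.2)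
    (x : Fin (m + 1) → K)
    (hdx : ∀ k, eval x (pderiv k F) = 0) :
    x = 0 := by
  have hq : ((2 ^ n : ℕ) : K) = 0 := by
    rw [Nat.cast_pow, Nat.cast_ofNat, CharTwo.two_eq_zero, zero_pow (by omega)]
  have hcard : (Fintype.card (Fin (m + 1)) : K) = 0 := by
    rw [Fintype.card_fin, CharP.cast_eq_zero_iff K 2, ← even_iff_two_dvd]
    exact hm.add_one
  have hpow : (fun k => x k ^ 2 ^ n) = 0 := by
    refine eq_zero_of_sum_erase_eq_zero hcard fun k => ?_
    simpa only [hF, pderiv_sum_offDiag_X_pow_mul_X hq, map_sum, map_pow, eval_X] using hdx k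
  funext k
  exact pow_eq_zero_iff (by positivity) |>.mp (congrFun hpow k)

/-- Exercise 9.5 (second part): in characteristic 2 and for `m` odd, the form
`F = Σ_{i ≠ j} X_i^{2^n} X_j` defines a smooth hypersurface in `ℙ^m`. -/
theorem sum_offDiag_smooth
    (K : Type) [Field K] [CharP K 2] (n : ℕ) (hn : 1 ≤ n)
    (m : ℕ) (hm : Odd m)
    (F : MvPolynomial (Fin (m + 1)) K)
    (hF : F = ∑ ij ∈ Finset.univ.offDiag, X ij.1 ^ 2 ^ n * X ij.2)
    (x : Fin (m + 1) → K)
    (hx : eval x F = 0) (hdx : ∀ k, eval x (pderiv k F) = 0) :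
    x = 0 :=
  sum_offDiag_smooth_general K n hn m hm F hF x hdx
end

section
/- Let F = X₀³ + X₁³ + X₂³ + X₀²X₁ + X₁²X₂ + X₂²X₀ + X₀X₁X₂ + X₂²X₃ + X₂X₃² be the cubic form over 𝔽₂ = ZMod 2 defining the smooth cubic surface S ⊂ P³ with a unique 𝔽₂-point. Then S contains no rational curve of degree ≤ 8 defined over 𝔽₂: for every d with 1 ≤ d ≤ 8 there do not exist homogeneous binary forms f₀, f₁, f₂, f₃ of degree d over ZMod 2 with no common nonzero zero over the algebraic closure of ZMod 2 such that substituting the f_i into F yields the identically zero polynomial. -/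
open MvPolynomial

/-!
Write `F = N(X₀, X₁, X₂) + X₂ X₃ (X₂ + X₃)`, where the cubic form `N` has no nontrivial zero over
`𝔽₂`; hence every `𝔽₂`-point of `S` has `X₀ = X₁ = X₂ = 0`. A curve `(f₀ : f₁ : f₂ : f₃)` sends
each of the three `𝔽₂`-points of `ℙ¹` there, so at the corresponding linear form `π` we have
`π ∣ f₀, f₁, f₂` and `π ∤ f₃`; then `f₂ f₃ (f₂ + f₃) = -N(f₀, f₁, f₂) ≡ 0 mod π³` forces `π³ ∣ f₂`.
A nonzero binary form of degree `≤ 8` cannot be divisible by the cube of the product of the three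
linear forms, so `f₂ = 0`. Then `f₀³ + f₀² f₁ + f₁³ = 0`, and since `x³ + x² + 1` has no root in
`𝔽₂` this forces `f₀ = f₁ = 0`. A zero of `f₃` over the algebraic closure is then a common zero.
-/

namespace MvPolynomial

theorem eq_zero_of_forall_eval_eq_zero_of_map {σ ι k L : Type*} [Field k] [CommRing L]
    [Nontrivial L] [Algebra k L] {f : ι → MvPolynomial σ k}
    (hf : ∀ y : σ → L, (∀ i, eval y ((f i).map (algebraMap k L)) = 0) → y = 0)
    {v : σ → k} (hv : ∀ i, eval v (f i) = 0) : v = 0 := by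
  have h := hf (algebraMap k L ∘ v) fun i => by rw [eval_map, ← eval₂_comp, hv i, map_zero]
  funext j
  exact (algebraMap k L).injective (by simpa using congrFun h j)

variable {R : Type*} [CommSemiring R]

noncomputable def dehomogenize₁ : MvPolynomial (Fin 2) R →ₐ[R] Polynomial R :=
  aeval ![Polynomial.X, 1]

noncomputable def dehomogenize₀ : MvPolynomial (Fin 2) R →ₐ[R] Polynomial R :=
  aeval ![1, Polynomial.X]

theorem eval_dehomogenize₁ (r : R) (p : MvPolynomial (Fin 2) R) :
    (dehomogenize₁ p).eval r = eval ![r, 1] p := by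
  induction p using MvPolynomial.induction_on with
  | C a => simp [dehomogenize₁]
  | add p q hp hq => rw [map_add, Polynomial.eval_add, hp, hq, map_add]
  | mul_X p i hp =>
    rw [map_mul, Polynomial.eval_mul, hp, map_mul]
    fin_cases i <;> simp [dehomogenize₁]

theorem eval_dehomogenize₀ (r : R) (p : MvPolynomial (Fin 2) R) :
    (dehomogenize₀ p).eval r = eval ![1, r] p := by
  induction p using MvPolynomial.induction_on with
  | C a => simp [dehomogenize₀]
  | add p q hp hq => rw [map_add, Polynomial.eval_add, hp, hq, map_add]
  | mul_X p i hp =>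
    rw [map_mul, Polynomial.eval_mul, hp, map_mul]
    fin_cases i <;> simp [dehomogenize₀]

theorem dehomogenize₁_monomial (m : Fin 2 →₀ ℕ) (c : R) :
    dehomogenize₁ (monomial m c) = Polynomial.C c * Polynomial.X ^ m 0 := by
  simp [dehomogenize₁, aeval_monomial, Finsupp.prod_fintype, Fin.prod_univ_two,
    Polynomial.C_eq_algebraMap]

theorem dehomogenize₀_monomial (m : Fin 2 →₀ ℕ) (c : R) :
    dehomogenize₀ (monomial m c) = Polynomial.C c * Polynomial.X ^ m 1 := by
  simp [dehomogenize₀, aeval_monomial, Finsupp.prod_fintype, Fin.prod_univ_two,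
    Polynomial.C_eq_algebraMap]

variable {f : MvPolynomial (Fin 2) R} {d : ℕ}

theorem IsHomogeneous.add_eq_of_mem_support (hf : f.IsHomogeneous d) {m : Fin 2 →₀ ℕ}
    (hm : m ∈ f.support) : m 0 + m 1 = d := by
  simpa [Finsupp.weight_apply, Finsupp.sum_fintype, Fin.sum_univ_two] using
    hf (mem_support_iff.mp hm)

theorem IsHomogeneous.natDegree_dehomogenize₁_le (hf : f.IsHomogeneous d) :
    (dehomogenize₁ f).natDegree ≤ d := by
  rw [f.as_sum, map_sum]
  refine Polynomial.natDegree_sum_le_of_forall_le _ _ fun m hm => ?_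
  have := hf.add_eq_of_mem_support hm
  rw [dehomogenize₁_monomial]
  exact (Polynomial.natDegree_C_mul_X_pow_le _ _).trans (by omega)

theorem IsHomogeneous.reflect_dehomogenize₁ (hf : f.IsHomogeneous d) :
    (dehomogenize₁ f).reflect d = dehomogenize₀ f := by
  ext k
  conv_lhs => rw [f.as_sum]
  conv_rhs => rw [f.as_sum]
  simp only [map_sum, Polynomial.coeff_reflect, Polynomial.finsetSum_coeff,
    dehomogenize₁_monomial, dehomogenize₀_monomial, Polynomial.coeff_C_mul_X_pow]
  refine Finset.sum_congr rfl fun m hm => ?_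
  have := hf.add_eq_of_mem_support hm
  refine if_congr ?_ rfl rfl
  rcases le_or_gt k d with hk | hk
  · rw [Polynomial.revAt_le hk]; omega
  · rw [Polynomial.revAt_eq_self_of_lt hk]; omega

theorem IsHomogeneous.coeff_dehomogenize₁ (hf : f.IsHomogeneous d) :
    (dehomogenize₁ f).coeff d = eval ![1, 0] f := by
  rw [← eval_dehomogenize₀, ← Polynomial.coeff_zero_eq_eval_zero, ← hf.reflect_dehomogenize₁,
    Polynomial.coeff_reflect, Polynomial.revAt_zero]

theorem IsHomogeneous.natDegree_dehomogenize₁_le_sub (hf : f.IsHomogeneous d) {k : ℕ}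
    (h : Polynomial.X ^ k ∣ dehomogenize₀ f) : (dehomogenize₁ f).natDegree ≤ d - k := by
  rw [Polynomial.natDegree_le_iff_coeff_eq_zero]
  intro n hn
  rcases lt_or_ge d n with hdn | hnd
  · exact Polynomial.coeff_eq_zero_of_natDegree_lt (hf.natDegree_dehomogenize₁_le.trans_lt hdn)
  · have := (Polynomial.X_pow_dvd_iff.mp h) (d - n) (by omega)
    rwa [← hf.reflect_dehomogenize₁, Polynomial.coeff_reflect,
      Polynomial.revAt_le (Nat.sub_le d n), Nat.sub_sub_self hnd] at this

theorem IsHomogeneous.eq_zero_of_dehomogenize₁_eq_zero (hf : f.IsHomogeneous d)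
    (h : dehomogenize₁ f = 0) : f = 0 := by
  rw [← Polynomial.homogenize_eq_of_isHomogeneous hf h, Polynomial.homogenize_zero]

theorem IsHomogeneous.exists_eval_eq_zero {K : Type*} [Field K] [IsAlgClosed K]
    {f : MvPolynomial (Fin 2) K} (hf : f.IsHomogeneous d) (hd : d ≠ 0) :
    ∃ y ≠ 0, eval y f = 0 := by
  by_cases h : eval ![1, 0] f = 0
  · exact ⟨![1, 0], by simp, h⟩
  have hdeg : (dehomogenize₁ f).natDegree = d :=
    le_antisymm hf.natDegree_dehomogenize₁_le
      (Polynomial.le_natDegree_of_ne_zero (hf.coeff_dehomogenize₁ ▸ h))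
  obtain ⟨r, hr⟩ := IsAlgClosed.exists_root (dehomogenize₁ f)
    (fun h0 => hd (hdeg ▸ Polynomial.natDegree_eq_zero_iff_degree_le_zero.mpr h0.le))
  exact ⟨![r, 1], by simp, (eval_dehomogenize₁ r f) ▸ hr⟩

end MvPolynomial

theorem IsCoprime.isUnit_of_cube_add_sq_mul_add_cube_eq_zero {R : Type*} [CommRing R] {A B : R}
    (hAB : IsCoprime A B) (h : A ^ 3 + A ^ 2 * B + B ^ 3 = 0) : IsUnit A ∧ IsUnit B := by
  have hA : A ∣ B ^ 3 := ⟨-(A ^ 2 + A * B), by linear_combination h⟩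
  have hB : B ∣ A ^ 3 := ⟨-(A ^ 2 + B ^ 2), by linear_combination h⟩
  exact ⟨(hAB.pow_right (n := 3)).isUnit_of_dvd' dvd_rfl hA,
    (hAB.symm.pow_right (n := 3)).isUnit_of_dvd' dvd_rfl hB⟩

open Polynomial in
theorem Polynomial.eq_zero_of_cube_add_sq_mul_add_cube_eq_zero {k : Type*} [Field k]
    (hk : ∀ a b : k, a ^ 3 + a ^ 2 * b + b ^ 3 = 0 → a = 0 ∧ b = 0) {P Q : k[X]}
    (h : P ^ 3 + P ^ 2 * Q + Q ^ 3 = 0) : P = 0 ∧ Q = 0 := by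
  rcases eq_or_ne Q 0 with rfl | hQ
  · exact ⟨pow_eq_zero_iff three_ne_zero |>.mp (by simpa using h), rfl⟩
  exfalso
  obtain ⟨A, B, c, hAB, rfl, rfl⟩ := UniqueFactorizationMonoid.exists_reduced_factors' P Q hQ
  have hN : A ^ 3 + A ^ 2 * B + B ^ 3 = 0 := by
    refine (mul_eq_zero.mp ?_).resolve_left (pow_ne_zero 3 (left_ne_zero_of_mul hQ))
    rw [← h]
    ring
  obtain ⟨⟨a, ha, rfl⟩, ⟨b, -, rfl⟩⟩ :=
    (hAB.isCoprime.isUnit_of_cube_add_sq_mul_add_cube_eq_zero hN).imp isUnit_iff.mp isUnit_iff.mp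
  simp only [← C_pow, ← C_mul, ← C_add, C_eq_zero] at hN
  exact ha.ne_zero (hk a b hN).1

namespace SwDCubic

theorem aeval_eq {A : Type*} [CommSemiring A] [Algebra (ZMod 2) A] (v : Fin 4 → A) :
    aeval v SwDCubic = v 0 ^ 3 + v 1 ^ 3 + v 2 ^ 3 + v 0 ^ 2 * v 1 + v 1 ^ 2 * v 2 +
      v 2 ^ 2 * v 0 + v 0 * v 1 * v 2 + v 2 ^ 2 * v 3 + v 2 * v 3 ^ 2 := by
  simp [SwDCubic]

theorem eq_zero_of_aeval_eq_zero {v : Fin 4 → ZMod 2} (hv : aeval v SwDCubic = 0) :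
    v 0 = 0 ∧ v 1 = 0 ∧ v 2 = 0 := by
  have key : ∀ a b c e : ZMod 2, a ^ 3 + b ^ 3 + c ^ 3 + a ^ 2 * b + b ^ 2 * c + c ^ 2 * a +
      a * b * c + c ^ 2 * e + c * e ^ 2 = 0 → a = 0 ∧ b = 0 ∧ c = 0 := by decide
  exact key _ _ _ _ (aeval_eq v ▸ hv)

theorem pow_three_dvd {A : Type*} [CommRing A] [IsDomain A] [Algebra (ZMod 2) A] {v : Fin 4 → A}
    (hv : aeval v SwDCubic = 0) {π : A} (hπ : Prime π) (h0 : π ∣ v 0) (h1 : π ∣ v 1)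
    (h2 : π ∣ v 2) (h3 : ¬ π ∣ v 3) : π ^ 3 ∣ v 2 := by
  obtain ⟨a, ha⟩ := h0
  obtain ⟨b, hb⟩ := h1
  obtain ⟨c, hc⟩ := h2
  rw [aeval_eq, ha, hb, hc] at hv
  rw [hc]
  have hsplit : π * c * (v 3 * (π * c + v 3)) = π ^ 3 * -(a ^ 3 + b ^ 3 + c ^ 3 + a ^ 2 * b +
      b ^ 2 * c + c ^ 2 * a + a * b * c) := by
    linear_combination hv
  refine hπ.pow_dvd_of_dvd_mul_right 3 (fun h => ?_) ⟨_, hsplit⟩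
  rcases hπ.dvd_mul.mp h with h | h
  · exact h3 h
  · exact h3 ((dvd_add_right (dvd_mul_right π c)).mp h)

variable {f : Fin 4 → MvPolynomial (Fin 2) (ZMod 2)}

theorem aeval_comp_of_bind₁_eq_zero {A : Type*} [CommSemiring A] [Algebra (ZMod 2) A]
    (hF : bind₁ f SwDCubic = 0) (ψ : MvPolynomial (Fin 2) (ZMod 2) →ₐ[ZMod 2] A) :
    aeval (ψ ∘ f) SwDCubic = 0 := by
  show aeval (fun i => ψ (f i)) SwDCubic = 0
  rw [← comp_aeval_apply, ← bind₁, hF, map_zero]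

theorem eval_eq_zero_of_bind₁_eq_zero (hF : bind₁ f SwDCubic = 0) (v : Fin 2 → ZMod 2) :
    eval v (f 0) = 0 ∧ eval v (f 1) = 0 ∧ eval v (f 2) = 0 :=
  eq_zero_of_aeval_eq_zero (aeval_comp_of_bind₁_eq_zero hF (aeval v))

theorem X_sub_C_pow_three_dvd (hF : bind₁ f SwDCubic = 0)
    (ψ : MvPolynomial (Fin 2) (ZMod 2) →ₐ[ZMod 2] Polynomial (ZMod 2)) {r : ZMod 2}
    {v : Fin 2 → ZMod 2} (hψ : ∀ p, (ψ p).eval r = eval v p) (h3 : eval v (f 3) ≠ 0) :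
    (Polynomial.X - Polynomial.C r) ^ 3 ∣ ψ (f 2) := by
  have hdvd (i : Fin 4) : Polynomial.X - Polynomial.C r ∣ ψ (f i) ↔ eval v (f i) = 0 := by
    rw [Polynomial.dvd_iff_isRoot, Polynomial.IsRoot, hψ]
  obtain ⟨h0, h1, h2⟩ := eval_eq_zero_of_bind₁_eq_zero hF v
  exact pow_three_dvd (aeval_comp_of_bind₁_eq_zero hF ψ) (Polynomial.prime_X_sub_C r)
    ((hdvd 0).2 h0) ((hdvd 1).2 h1) ((hdvd 2).2 h2) (mt (hdvd 3).1 h3)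

theorem component_two_eq_zero (hF : bind₁ f SwDCubic = 0) {d : ℕ} (hf2 : (f 2).IsHomogeneous d)
    (hd : d ≤ 8) (h3 : ∀ v, v ≠ 0 → eval v (f 3) ≠ 0) : f 2 = 0 := by
  refine hf2.eq_zero_of_dehomogenize₁_eq_zero (by_contra fun hne => ?_)
  have h0 : Polynomial.X ^ 3 ∣ dehomogenize₁ (f 2) := by
    simpa using X_sub_C_pow_three_dvd hF _ (eval_dehomogenize₁ 0) (h3 ![0, 1] (by simp))
  have h1 : (Polynomial.X - Polynomial.C 1) ^ 3 ∣ dehomogenize₁ (f 2) :=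
    X_sub_C_pow_three_dvd hF _ (eval_dehomogenize₁ 1) (h3 ![1, 1] (by simp))
  have hinf : Polynomial.X ^ 3 ∣ dehomogenize₀ (f 2) := by
    simpa using X_sub_C_pow_three_dvd hF _ (eval_dehomogenize₀ 0) (h3 ![1, 0] (by simp))
  have hcop : IsCoprime ((Polynomial.X : Polynomial (ZMod 2)) ^ 3)
      ((Polynomial.X - Polynomial.C 1) ^ 3) := by
    simpa using (Polynomial.isCoprime_X_sub_C_of_isUnit_sub
      (sub_ne_zero.mpr (zero_ne_one (α := ZMod 2))).isUnit).pow (m := 3) (n := 3)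
  have hdeg : ((Polynomial.X : Polynomial (ZMod 2)) ^ 3 *
      (Polynomial.X - Polynomial.C 1) ^ 3).natDegree = 6 := by
    compute_degree!
  have h6 := hdeg ▸ Polynomial.natDegree_le_of_dvd (hcop.mul_dvd h0 h1) hne
  have := hf2.natDegree_dehomogenize₁_le_sub hinf
  omega

theorem components_zero_one_eq_zero (hF : bind₁ f SwDCubic = 0) {d : ℕ}
    (hf0 : (f 0).IsHomogeneous d) (hf1 : (f 1).IsHomogeneous d) (h2 : f 2 = 0) :
    f 0 = 0 ∧ f 1 = 0 := by
  have hN := aeval_comp_of_bind₁_eq_zero hF dehomogenize₁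
  simp only [aeval_eq, Function.comp_apply, h2, map_zero] at hN
  obtain ⟨h0, h1⟩ := Polynomial.eq_zero_of_cube_add_sq_mul_add_cube_eq_zero
    (P := dehomogenize₁ (f 0)) (Q := dehomogenize₁ (f 1)) (by decide)
    (by linear_combination hN)
  exact ⟨hf0.eq_zero_of_dehomogenize₁_eq_zero h0, hf1.eq_zero_of_dehomogenize₁_eq_zero h1⟩

end SwDCubic

open SwDCubic in
/-- The smooth cubic surface over `𝔽₂` with a unique rational point contains no
rational curve of degree at most 8 defined over `𝔽₂`. -/
theorem SwDCubic_no_low_degree_rational_curve (d : ℕ) (hd1 : 1 ≤ d) (hd8 : d ≤ 8) :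
    ¬ ∃ f : Fin 4 → MvPolynomial (Fin 2) (ZMod 2),
        (∀ i, (f i).IsHomogeneous d) ∧
        (∀ y : Fin 2 → AlgebraicClosure (ZMod 2),
          (∀ i, eval y ((f i).map (algebraMap (ZMod 2) (AlgebraicClosure (ZMod 2)))) = 0) →
          y = 0) ∧
        bind₁ f SwDCubic = 0 := by
  rintro ⟨f, hhom, hnz, hF⟩
  have h3 (v : Fin 2 → ZMod 2) (hv : v ≠ 0) : eval v (f 3) ≠ 0 := fun h3 =>
    hv <| eq_zero_of_forall_eval_eq_zero_of_map hnz fun i => by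
      obtain ⟨h0, h1, h2⟩ := eval_eq_zero_of_bind₁_eq_zero hF v
      fin_cases i <;> assumption
  have h2 := component_two_eq_zero hF (hhom 2) hd8 h3
  obtain ⟨h0, h1⟩ := components_zero_one_eq_zero hF (hhom 0) (hhom 1) h2
  obtain ⟨y, hy, hy3⟩ :=
    ((hhom 3).map (algebraMap (ZMod 2) (AlgebraicClosure (ZMod 2)))).exists_eval_eq_zero
      (by omega)
  refine hy (hnz y fun i => ?_)
  fin_cases i <;> simp [h0, h1, h2, hy3]
end
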